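/- arXiv:1401.6204 — 4 statements merged into one kernel-verified Lean document; each statement's English description precedes it below -/
import Mathlib

section
/- Let A, B, C > 0 be real constants and let h : [0,∞) → [0,∞) be continuous, non-decreasing, with h(0) = 0. Assume that for every t ≥ 0, if t + h(t) ≤ 1/(2B) then h(t) ≤ 2·C·A·B²·(t + h(t))². Set ε₀ := min(1/(4B), 1/(16·A·B²·C)). Then h(t) ≤ ε₀ for every t ∈ [0, ε₀). -/
/-!
Put `ε := ε₀` and `K := 2CAB²`, so that `Kε ≤ 1/8` and `3ε/2 ≤ 1/(2B)`. The continuous function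
`s ↦ s + h s` starts at `0`, so if it exceeded `3ε/2` somewhere on `[0, t]` with `t < ε` it would
equal `3ε/2` at some `c < ε`. There the hypothesis applies and gives `h c ≤ K (3ε/2)² ≤ 9ε/32`,
whereas `h c = 3ε/2 - c > ε/2`. Hence `t + h t < 3ε/2`, and the hypothesis at `t` itself gives
`h t ≤ K (3ε/2)² ≤ ε`.
-/

open Set

theorem lt_of_continuousOn_Icc_of_forall_ne {g : ℝ → ℝ} {a t b : ℝ} (hat : a ≤ t)
    (hg : ContinuousOn g (Icc a t)) (ha : g a < b) (hne : ∀ s ∈ Icc a t, g s ≠ b) : g t < b := by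
  by_contra! hbt
  obtain ⟨c, hc, hgc⟩ := intermediate_value_Icc hat hg ⟨ha.le, hbt⟩
  exact hne c hc hgc

section QuadraticBootstrap

variable {h : ℝ → ℝ} {K ε D : ℝ}

theorem add_lt_of_le_mul_sq (hε : 0 < ε) (hKε : K * ε ≤ 1 / 8) (hεD : 3 / 2 * ε ≤ D)
    (hcont : ContinuousOn h (Ici 0)) (h0 : h 0 = 0)
    (hineq : ∀ t, 0 ≤ t → t + h t ≤ D → h t ≤ K * (t + h t) ^ 2)
    {t : ℝ} (ht0 : 0 ≤ t) (htε : t < ε) : t + h t < 3 / 2 * ε := by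
  have hgap : ∀ s, 0 ≤ s → s < ε → s + h s ≠ 3 / 2 * ε := by
    intro s hs0 hsε hs
    have hhs := hineq s hs0 (hs ▸ hεD)
    rw [hs] at hhs
    nlinarith [mul_le_mul_of_nonneg_left hKε hε.le]
  exact lt_of_continuousOn_Icc_of_forall_ne (g := fun s => s + h s) ht0
    (continuousOn_id.add (hcont.mono Icc_subset_Ici_self)) (by simpa [h0] using hε)
    fun s hs => hgap s hs.1 (hs.2.trans_lt htε)

theorem le_of_le_mul_sq (hK : 0 ≤ K) (hε : 0 < ε) (hKε : K * ε ≤ 1 / 8)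
    (hεD : 3 / 2 * ε ≤ D) (hcont : ContinuousOn h (Ici 0)) (hnonneg : ∀ t, 0 ≤ t → 0 ≤ h t)
    (h0 : h 0 = 0) (hineq : ∀ t, 0 ≤ t → t + h t ≤ D → h t ≤ K * (t + h t) ^ 2)
    {t : ℝ} (ht0 : 0 ≤ t) (htε : t < ε) : h t ≤ ε := by
  have hlt := add_lt_of_le_mul_sq hε hKε hεD hcont h0 hineq ht0 htε
  have hsq : (t + h t) ^ 2 ≤ (3 / 2 * ε) ^ 2 :=
    pow_le_pow_left₀ (add_nonneg ht0 (hnonneg t ht0)) hlt.le 2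
  calc h t ≤ K * (t + h t) ^ 2 := hineq t ht0 (hlt.le.trans hεD)
    _ ≤ K * (3 / 2 * ε) ^ 2 := mul_le_mul_of_nonneg_left hsq hK
    _ = 9 / 4 * ε * (K * ε) := by ring
    _ ≤ 9 / 4 * ε * (1 / 8) := mul_le_mul_of_nonneg_left hKε (by positivity)
    _ ≤ ε := by linarith

end QuadraticBootstrap

theorem bootstrap_bound_general (A B C : ℝ) (hA : 0 < A) (hB : 0 < B) (hC : 0 < C)
    (h : ℝ → ℝ) (hcont : ContinuousOn h (Set.Ici 0))
    (hnonneg : ∀ t, 0 ≤ t → 0 ≤ h t)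
    (h0 : h 0 = 0)
    (hineq : ∀ t, 0 ≤ t → t + h t ≤ 1 / (2 * B) →
      h t ≤ 2 * C * A * B ^ 2 * (t + h t) ^ 2) :
    ∀ t, 0 ≤ t → t < min (1 / (4 * B)) (1 / (16 * A * B ^ 2 * C)) →
      h t ≤ min (1 / (4 * B)) (1 / (16 * A * B ^ 2 * C)) := by
  intro t ht0 htε
  set ε := min (1 / (4 * B)) (1 / (16 * A * B ^ 2 * C))
  have hε : 0 < ε := lt_min (by positivity) (by positivity)
  have hKε : 2 * C * A * B ^ 2 * ε ≤ 1 / 8 := by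
    have := (le_div_iff₀ (by positivity)).mp (min_le_right _ _ : ε ≤ 1 / (16 * A * B ^ 2 * C))
    linarith
  have hεD : 3 / 2 * ε ≤ 1 / (2 * B) := by
    have := (le_div_iff₀ (by positivity)).mp (min_le_left _ _ : ε ≤ 1 / (4 * B))
    rw [le_div_iff₀ (by positivity)]
    nlinarith
  exact le_of_le_mul_sq (by positivity) hε hKε hεD hcont hnonneg h0 hineq ht0 htε

theorem bootstrap_bound (A B C : ℝ) (hA : 0 < A) (hB : 0 < B) (hC : 0 < C)
    (h : ℝ → ℝ) (hcont : ContinuousOn h (Set.Ici 0))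
    (hmono : MonotoneOn h (Set.Ici 0))
    (hnonneg : ∀ t, 0 ≤ t → 0 ≤ h t)
    (h0 : h 0 = 0)
    (hineq : ∀ t, 0 ≤ t → t + h t ≤ 1 / (2 * B) →
      h t ≤ 2 * C * A * B ^ 2 * (t + h t) ^ 2) :
    ∀ t, 0 ≤ t → t < min (1 / (4 * B)) (1 / (16 * A * B ^ 2 * C)) →
      h t ≤ min (1 / (4 * B)) (1 / (16 * A * B ^ 2 * C)) :=
  bootstrap_bound_general A B C hA hB hC h hcont hnonneg h0 hineq
end

section
/- Let n ≥ 3 be an integer, let ν > 0, and let f : ℝ → ℝ be real-analytic on (−ν, ν) with f(0) = 0 and f not identically zero on any neighborhood of 0. Assume that for all t in some neighborhood of 0 one has 1 + 2t²f(t) − ((n−2)/2)·t³f'(t) ≥ (1 − (n/2)·t³f'(t))^{(n−2)/n}. Then there exists t̃ > 0 such that f(t) > 0 for all t ∈ (0, t̃). -/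
/-!
With `x = (n/2) t³ f'(t)` and `α = (n-2)/n ∈ [0,1]`, the lower bound
`(1 - x)^α ≥ 1 - α x - x²` (valid for `|x| ≤ 1/2`) turns the hypothesis into
`2 t² f(t) + x² ≥ 0`. If `f(t) = t^(k+1) g(t)` with `g(0) ≠ 0`, then `t f'(t)` is also
`O(t^(k+1))`, so `x²` is of strictly higher order than `t² f(t)`; hence `g(0) > 0`.
-/

open Filter Real Topology

lemma one_add_mul_sub_sq_le_rpow {α s : ℝ} (hα₀ : 0 ≤ α) (hα₁ : α ≤ 1)
    (hs : |s| ≤ 1 / 2) :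
    1 + α * s - s ^ 2 ≤ (1 + s) ^ α := by
  obtain ⟨hs₁, hs₂⟩ := abs_le.mp hs
  have hu : 0 < 1 + s := by linarith
  have hv : 0 < 1 + (1 - α) * s := by nlinarith
  -- Bernoulli's inequality for the base `(1 + s)⁻¹ = 1 - s / (1 + s)`
  have hbern : ((1 + s) ^ α)⁻¹ ≤ (1 + (1 - α) * s) / (1 + s) := by
    have h := rpow_one_add_le_one_add_mul_self (s := -s / (1 + s))
      (by rw [le_div_iff₀ hu]; linarith) hα₀ hα₁
    rw [← inv_rpow hu.le]
    convert h using 1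
    · congr 1; field_simp; ring
    · field_simp; ring
  have hquot : (1 + s) / (1 + (1 - α) * s) ≤ (1 + s) ^ α := by
    rw [div_le_iff₀ hv]
    rw [inv_le_comm₀ (by positivity) (by positivity), inv_div] at hbern
    rwa [div_le_iff₀ hv] at hbern
  refine le_trans ?_ hquot
  rw [le_div_iff₀ hv]
  nlinarith [sq_nonneg (2 * α - 1), sq_nonneg s,
    mul_nonneg (sub_nonneg.2 hα₁) (by linarith : (0 : ℝ) ≤ s + 1 / 2)]

lemma nonneg_add_sq_of_rpow_one_sub_le {α x y : ℝ} (hα₀ : 0 ≤ α) (hα₁ : α ≤ 1)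
    (hx : |x| ≤ 1 / 2) (h : (1 - x) ^ α ≤ 1 + y - α * x) : 0 ≤ y + x ^ 2 := by
  have := one_add_mul_sub_sq_le_rpow hα₀ hα₁ (s := -x) (by rwa [abs_neg])
  rw [← sub_eq_add_neg] at this
  nlinarith

lemma AnalyticAt.exists_eventuallyEq_pow_succ_mul {f : ℝ → ℝ} (hf : AnalyticAt ℝ f 0)
    (hf₀ : f 0 = 0) (hfne : ¬ ∀ᶠ t in 𝓝 0, f t = 0) :
    ∃ (k : ℕ) (g : ℝ → ℝ), AnalyticAt ℝ g 0 ∧ g 0 ≠ 0 ∧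
      ∀ᶠ t in 𝓝 0, f t = t ^ (k + 1) * g t := by
  obtain ⟨k, g, hg, hg₀, hfg⟩ := hf.exists_eventuallyEq_pow_smul_nonzero_iff.mpr hfne
  simp only [sub_zero, smul_eq_mul] at hfg
  obtain _ | k := k
  · have := hfg.self_of_nhds
    simp only [pow_zero, one_mul] at this
    exact absurd (this ▸ hf₀) hg₀
  · exact ⟨k, g, hg, hg₀, hfg⟩

lemma mul_deriv_eventuallyEq_pow_succ_mul {f g : ℝ → ℝ} {k : ℕ}
    (hg : ∀ᶠ t in 𝓝 0, DifferentiableAt ℝ g t)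
    (hfg : ∀ᶠ t in 𝓝 0, f t = t ^ (k + 1) * g t) :
    ∀ᶠ t in 𝓝 0, t * deriv f t = t ^ (k + 1) * ((k + 1) * g t + t * deriv g t) := by
  have hderiv : deriv f =ᶠ[𝓝 0] deriv (fun t => t ^ (k + 1) * g t) :=
    EventuallyEq.deriv hfg
  filter_upwards [hderiv, hg] with t ht hgt
  rw [ht, deriv_fun_mul (differentiableAt_pow _) hgt, deriv_pow_field]
  push_cast
  ring

/-- Near a zero of finite order, `t * f' t` has the same order as `f`, so its square cannot
compensate a negative leading coefficient. -/
lemma AnalyticAt.eventually_pos_of_nonneg_add_mul_sq {f c : ℝ → ℝ} (hf : AnalyticAt ℝ f 0)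
    (hf₀ : f 0 = 0) (hfne : ¬ ∀ᶠ t in 𝓝 0, f t = 0) (hc : ContinuousAt c 0)
    (h : ∀ᶠ t in 𝓝[>] 0, 0 ≤ f t + c t * (t * deriv f t) ^ 2) :
    ∀ᶠ t in 𝓝[>] 0, 0 < f t := by
  obtain ⟨k, g, hg, hg₀, hfg⟩ := hf.exists_eventuallyEq_pow_succ_mul hf₀ hfne
  have hdf := mul_deriv_eventuallyEq_pow_succ_mul (hg.eventually_analyticAt.mono
    fun _ h => h.differentiableAt) hfg
  set φ : ℝ → ℝ := fun t => g t + c t * t ^ (k + 1) * ((k + 1) * g t + t * deriv g t) ^ 2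
  have hφ : ContinuousAt φ 0 := by
    have := hg.continuousAt; have := hg.deriv.continuousAt; fun_prop
  have hφ_nonneg : ∀ᶠ t in 𝓝[>] 0, 0 ≤ φ t := by
    filter_upwards [h, nhdsWithin_le_nhds (hfg.and hdf), self_mem_nhdsWithin]
      with t ht ⟨hft, hdft⟩ (htpos : 0 < t)
    rw [hft, hdft] at ht
    have hfactor : t ^ (k + 1) * g t + c t * (t ^ (k + 1) * ((k + 1) * g t + t * deriv g t)) ^ 2 =
        t ^ (k + 1) * φ t := by
      simp only [φ]; ring
    exact nonneg_of_mul_nonneg_right (hfactor ▸ ht) (pow_pos htpos _)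
  have hg_pos : 0 < g 0 := by
    have hφ₀ : φ 0 = g 0 := by simp [φ]
    exact (hφ₀ ▸ ge_of_tendsto (hφ.tendsto.mono_left nhdsWithin_le_nhds) hφ_nonneg).lt_of_ne'
      hg₀
  filter_upwards [nhdsWithin_le_nhds (hfg.and (hg.continuousAt.eventually (lt_mem_nhds hg_pos))),
    self_mem_nhdsWithin] with t ⟨hft, hgt⟩ (htpos : 0 < t)
  rw [hft]
  positivity

lemma AnalyticAt.eventually_abs_mul_pow_mul_deriv_le {f : ℝ → ℝ} (hf : AnalyticAt ℝ f 0)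
    (c : ℝ) {j : ℕ} (hj : j ≠ 0) {ε : ℝ} (hε : 0 < ε) :
    ∀ᶠ t in 𝓝 0, |c * t ^ j * deriv f t| ≤ ε := by
  have hcont : ContinuousAt (fun t => c * t ^ j * deriv f t) 0 := by
    have := hf.deriv.continuousAt; fun_prop
  have htendsto : Tendsto (fun t => c * t ^ j * deriv f t) (𝓝 0) (𝓝 0) := by
    simpa [zero_pow hj] using hcont.tendsto
  filter_upwards [Metric.tendsto_nhds.mp htendsto ε hε] with t ht
  rw [Real.dist_eq, sub_zero] at ht
  exact ht.le

theorem eventually_pos_of_analytic (n : ℕ) (hn : 3 ≤ n) (ν : ℝ) (hν : 0 < ν)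
    (f : ℝ → ℝ) (hf : AnalyticOnNhd ℝ f (Set.Ioo (-ν) ν)) (hf0 : f 0 = 0)
    (hfne : ¬ ∀ᶠ t in nhds (0 : ℝ), f t = 0)
    (hineq : ∀ᶠ t in nhds (0 : ℝ),
      (1 - (n : ℝ) / 2 * t ^ 3 * deriv f t) ^ (((n : ℝ) - 2) / (n : ℝ)) ≤
        1 + 2 * t ^ 2 * f t - ((n : ℝ) - 2) / 2 * t ^ 3 * deriv f t) :
    ∃ t₀ : ℝ, 0 < t₀ ∧ ∀ t : ℝ, 0 < t → t < t₀ → 0 < f t := by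
  have hf₀ : AnalyticAt ℝ f 0 := hf 0 ⟨by linarith, hν⟩
  have hn' : (3 : ℝ) ≤ n := by exact_mod_cast hn
  set α : ℝ := ((n : ℝ) - 2) / n
  have hα₀ : 0 ≤ α := div_nonneg (by linarith) (by linarith)
  have hα₁ : α ≤ 1 := (div_le_one (by linarith)).mpr (by linarith)
  have hsmall := hf₀.eventually_abs_mul_pow_mul_deriv_le ((n : ℝ) / 2) three_ne_zero
    one_half_pos
  have hnonneg : ∀ᶠ t in 𝓝[>] 0,
      0 ≤ f t + (n : ℝ) ^ 2 / 8 * t ^ 2 * (t * deriv f t) ^ 2 := by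
    filter_upwards [nhdsWithin_le_nhds (hineq.and hsmall), self_mem_nhdsWithin]
      with t ⟨hineq_t, hsmall_t⟩ (htpos : 0 < t)
    have hscale :
        ((n : ℝ) - 2) / 2 * t ^ 3 * deriv f t = α * ((n : ℝ) / 2 * t ^ 3 * deriv f t) := by
      simp only [α]; field_simp
    rw [hscale] at hineq_t
    have h := nonneg_add_sq_of_rpow_one_sub_le hα₀ hα₁ hsmall_t hineq_t
    have hexpand : 2 * t ^ 2 * f t + ((n : ℝ) / 2 * t ^ 3 * deriv f t) ^ 2 =
        2 * t ^ 2 * (f t + (n : ℝ) ^ 2 / 8 * t ^ 2 * (t * deriv f t) ^ 2) := by ring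
    exact nonneg_of_mul_nonneg_right (hexpand ▸ h) (by positivity)
  have hpos := hf₀.eventually_pos_of_nonneg_add_mul_sq hf0 hfne (by fun_prop) hnonneg
  obtain ⟨t₀, ht₀, hIoo⟩ := (nhdsGT_basis (0 : ℝ)).eventually_iff.mp hpos
  exact ⟨t₀, ht₀, fun t ht htt₀ => hIoo ⟨ht, htt₀⟩⟩
end

section
/- Let S be a nonempty compact metric space, let ν > 0, and let F : S × [0, ν] → ℝ be continuous. Assume that for every φ ∈ S there exists t_φ ∈ (0, ν] such that F(φ, t) > 0 for all t ∈ (0, t_φ) and F(φ, t) < 0 for all t ∈ (t_φ, ν). Then there exists ν₂ ∈ (0, ν] such that F(φ, t) > 0 for every φ ∈ S and every t ∈ (0, ν₂). -/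
/-!
Let `T φ` be the sign-change time of `F (φ, ·)`. Since `F (φ, T φ / 2) > 0`, continuity keeps
`F (ψ, T φ / 2)` positive for `ψ` near `φ`, so `T φ / 2` cannot lie in `(T ψ, ν)`, where
`F (ψ, ·) < 0`; hence `T ψ ≥ T φ / 2`. Thus `T` is locally bounded below by a positive constant,
hence uniformly so on the compact space `S`.
-/

open Set Filter Topology

theorem CompactSpace.exists_pos_forall_le {X : Type*} [TopologicalSpace X] [CompactSpace X]
    {T : X → ℝ} (hT : ∀ x, ∃ ε > 0, ∀ᶠ y in 𝓝 x, ε ≤ T y) : ∃ ε > 0, ∀ y, ε ≤ T y := by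
  have hnear : ∀ x ∈ (univ : Set X), ∀ᶠ z : ℝ × X in 𝓝 (0, x), z.1 ≤ T z.2 := by
    intro x _
    obtain ⟨ε, hε, hy⟩ := hT x
    rw [nhds_prod_eq]
    filter_upwards [prod_mem_prod (eventually_lt_nhds hε) hy] with z ⟨hz, hzy⟩
    exact hz.le.trans hzy
  have hsmall : ∀ᶠ ε in 𝓝[>] (0 : ℝ), ∀ y ∈ (univ : Set X), ε ≤ T y :=
    nhdsWithin_le_nhds (isCompact_univ.eventually_forall_of_forall_eventually hnear)
  obtain ⟨ε, hε, hle⟩ := (eventually_mem_nhdsWithin.and hsmall).exists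
  exact ⟨ε, hε, fun y => hle y (mem_univ y)⟩

theorem eventually_half_le_signChange {X : Type*} [TopologicalSpace X] {ν : ℝ} {F : X × ℝ → ℝ}
    (hF : ContinuousOn F (univ ×ˢ Icc 0 ν)) {T : X → ℝ} (hT0 : ∀ x, 0 < T x) (hTν : ∀ x, T x ≤ ν)
    (hpos : ∀ x t, 0 < t → t < T x → 0 < F (x, t))
    (hneg : ∀ x t, T x < t → t < ν → F (x, t) < 0) (x : X) :
    ∀ᶠ y in 𝓝 x, T x / 2 ≤ T y := by
  set s := T x / 2
  have hs0 : 0 < s := half_pos (hT0 x)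
  have hsν : s < ν := (half_lt_self (hT0 x)).trans_le (hTν x)
  have hslice : Continuous fun y => F (y, s) :=
    hF.comp_continuous (by fun_prop) fun _ => ⟨mem_univ _, hs0.le, hsν.le⟩
  filter_upwards [hslice.continuousAt.eventually (lt_mem_nhds (hpos x s hs0 (half_lt_self (hT0 x))))]
    with y hy
  exact le_of_not_gt fun hlt => (hneg y s hlt hsν).not_gt hy

theorem uniform_positivity_general (S : Type*) [MetricSpace S] [CompactSpace S]
    (ν : ℝ) (hν : 0 < ν) (F : S × ℝ → ℝ)
    (hF : ContinuousOn F (Set.univ ×ˢ Set.Icc 0 ν))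
    (hwell : ∀ φ : S, ∃ tφ : ℝ, 0 < tφ ∧ tφ ≤ ν ∧
      (∀ t : ℝ, 0 < t → t < tφ → 0 < F (φ, t)) ∧
      (∀ t : ℝ, tφ < t → t < ν → F (φ, t) < 0)) :
    ∃ ν₂ : ℝ, 0 < ν₂ ∧ ν₂ ≤ ν ∧ ∀ (φ : S) (t : ℝ), 0 < t → t < ν₂ → 0 < F (φ, t) := by
  choose T hT0 hTν hpos hneg using hwell
  obtain ⟨ε, hε, hεT⟩ := CompactSpace.exists_pos_forall_le fun φ =>
    ⟨T φ / 2, half_pos (hT0 φ), eventually_half_le_signChange hF hT0 hTν hpos hneg φ⟩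
  refine ⟨min ε ν, lt_min hε hν, min_le_right _ _, fun φ t ht0 ht => hpos φ t ht0 ?_⟩
  exact (ht.trans_le (min_le_left _ _)).trans_le (hεT φ)

theorem uniform_positivity (S : Type*) [MetricSpace S] [CompactSpace S] [Nonempty S]
    (ν : ℝ) (hν : 0 < ν) (F : S × ℝ → ℝ)
    (hF : ContinuousOn F (Set.univ ×ˢ Set.Icc 0 ν))
    (hwell : ∀ φ : S, ∃ tφ : ℝ, 0 < tφ ∧ tφ ≤ ν ∧
      (∀ t : ℝ, 0 < t → t < tφ → 0 < F (φ, t)) ∧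
      (∀ t : ℝ, tφ < t → t < ν → F (φ, t) < 0)) :
    ∃ ν₂ : ℝ, 0 < ν₂ ∧ ν₂ ≤ ν ∧ ∀ (φ : S) (t : ℝ), 0 < t → t < ν₂ → 0 < F (φ, t) :=
  uniform_positivity_general S ν hν F hF hwell
end

section
/- Let H be a real Hilbert space and let T : H → H be a compact self-adjoint bounded linear operator such that ‖u‖² − ⟨T u, u⟩ ≥ 0 for every u ∈ H. Let N := ker(Id − T). Then there exists c > 0 such that ‖u‖² − ⟨T u, u⟩ ≥ c·‖Π_{N^⊥}(u)‖² for every u ∈ H, where Π_{N^⊥} denotes the orthogonal projection of H onto the orthogonal complement N^⊥ of N. -/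
/-!
Write `S = 1 - T`, a positive operator with `ker S = N`. Cauchy–Schwarz for the positive
semidefinite form `⟪S ·, ·⟫` gives `‖S u‖² ≤ ‖S‖ ⟪S u, u⟫`. Since `T` is self-adjoint it
preserves `Nᗮ`, where `1` is no longer an eigenvalue, so by the Fredholm alternative for the
compact operator `T` the operator `S` is bounded below on `Nᗮ`: `c ‖v‖ ≤ ‖S v‖`. As
`S u = S (Π_{Nᗮ} u)`, this yields `c² ‖Π_{Nᗮ} u‖² ≤ ‖S u‖² ≤ (‖S‖ + 1) ⟪S u, u⟫`.
-/

open scoped RealInnerProductSpace InnerProductSpace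
open Module End

namespace ContinuousLinearMap

variable {𝕜 E : Type*} [RCLike 𝕜] [NormedAddCommGroup E] [InnerProductSpace 𝕜 E]

theorem IsPositive.norm_apply_sq_le_opNorm_mul_re_inner {S : E →L[𝕜] E} (hS : S.IsPositive)
    (x : E) : ‖S x‖ ^ 2 ≤ ‖S‖ * RCLike.re ⟪S x, x⟫_𝕜 := by
  have hquad (t : ℝ) :
      0 ≤ RCLike.re ⟪S x, x⟫_𝕜 + 2 * t * ‖S x‖ ^ 2 + t ^ 2 * (‖S‖ * ‖S x‖ ^ 2) := by
    have hSSx : RCLike.re ⟪S (S x), S x⟫_𝕜 ≤ ‖S‖ * ‖S x‖ ^ 2 := by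
      grw [re_inner_le_norm, le_opNorm, mul_assoc, ← sq]
    have hsymm : ⟪S (S x), x⟫_𝕜 = ⟪S x, S x⟫_𝕜 := hS.isSymmetric _ _
    have h := hS.re_inner_nonneg_left (x + (t : 𝕜) • S x)
    simp only [map_add, map_smul, inner_add_left, inner_add_right, inner_smul_left,
      inner_smul_right, hsymm, RCLike.conj_ofReal, RCLike.re_ofReal_mul,
      inner_self_eq_norm_sq] at h
    nlinarith [sq_nonneg t]
  rcases (norm_nonneg S).eq_or_lt with hS0 | hS0
  · simp [norm_eq_zero.mp hS0.symm]
  · have h := hquad (-‖S‖⁻¹)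
    field_simp at h
    nlinarith

theorem apply_starProjection_orthogonal_ker [CompleteSpace E] (S : E →L[𝕜] E) (u : E) :
    S ((LinearMap.ker (S : E →ₗ[𝕜] E))ᗮ.starProjection u) = S u := by
  set K := LinearMap.ker (S : E →ₗ[𝕜] E)
  have hK : S (K.starProjection u) = 0 := K.starProjection_apply_mem u
  conv_rhs => rw [← K.starProjection_add_starProjection_orthogonal u]
  rw [map_add, hK, zero_add]

end ContinuousLinearMap

namespace IsCompactOperator

variable {𝕜 E : Type*} [RCLike 𝕜] [NormedAddCommGroup E] [InnerProductSpace 𝕜 E]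

theorem exists_pos_mul_norm_le_norm_apply_sub_smul_of_isSymmetric
    {T : E →L[𝕜] E} (hT : IsCompactOperator T) (hTsymm : (T : E →ₗ[𝕜] E).IsSymmetric)
    {μ : 𝕜} (hμ : μ ≠ 0) :
    ∃ c > 0, ∀ v ∈ (eigenspace (T : E →ₗ[𝕜] E) μ)ᗮ, c * ‖v‖ ≤ ‖T v - μ • v‖ := by
  set V := (eigenspace (T : E →ₗ[𝕜] E) μ)ᗮ
  have hV : ∀ v ∈ V, T v ∈ V := hTsymm.invariant_orthogonalComplement_eigenspace μ
  have hTV : IsCompactOperator (T.restrict hV) :=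
    hT.restrict (f := (T : E →ₗ[𝕜] E)) hV (Submodule.isClosed_orthogonal _)
  have hμV : ¬ HasEigenvalue ((T.restrict hV : V →L[𝕜] V) : End 𝕜 V) μ := by
    intro h
    obtain ⟨v, hv⟩ := h.exists_hasEigenvector
    have hmem : (v : E) ∈ eigenspace (T : E →ₗ[𝕜] E) μ := by
      simpa [mem_eigenspace_iff, Subtype.ext_iff] using hv.apply_eq_smul
    exact hv.2 <| Subtype.ext <|
      Submodule.disjoint_def.mp (Submodule.orthogonal_disjoint _) _ hmem v.2
  obtain ⟨c, hc, hcV⟩ := antilipschitzWith_iff_exists_mul_le_norm.mp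
    (hTV.antilipschitz_of_not_hasEigenvalue hμ hμV)
  exact ⟨c, hc, fun v hv => hcV ⟨v, hv⟩⟩

end IsCompactOperator

theorem spectral_gap_of_compact_selfadjoint (H : Type*) [NormedAddCommGroup H]
    [InnerProductSpace ℝ H] [CompleteSpace H] (T : H →L[ℝ] H)
    (hTcomp : IsCompactOperator T) (hTsa : IsSelfAdjoint T)
    (hTpos : ∀ u : H, 0 ≤ ‖u‖ ^ 2 - ⟪T u, u⟫) :
    ∃ c : ℝ, 0 < c ∧ ∀ u : H,
      c * ‖(Submodule.orthogonalProjectionOnto (LinearMap.ker ((ContinuousLinearMap.id ℝ H - T : H →L[ℝ] H) : H →ₗ[ℝ] H))ᗮ u : H)‖ ^ 2 ≤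
        ‖u‖ ^ 2 - ⟪T u, u⟫ := by
  set S := ContinuousLinearMap.id ℝ H - T
  have hform (u : H) : ⟪S u, u⟫ = ‖u‖ ^ 2 - ⟪T u, u⟫ := by simp [S, inner_sub_left]
  have hS : S.IsPositive := S.isPositive_iff'.mpr
    ⟨ContinuousLinearMap.isPositive_id.isSelfAdjoint.sub hTsa, fun u => hform u ▸ hTpos u⟩
  have hker : LinearMap.ker (S : H →ₗ[ℝ] H) = eigenspace (T : H →ₗ[ℝ] H) 1 := by
    ext v
    simp [S, sub_eq_zero, eq_comm (a := T v)]
  obtain ⟨c, hc, hbound⟩ :=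
    hTcomp.exists_pos_mul_norm_le_norm_apply_sub_smul_of_isSymmetric hTsa.isSymmetric one_ne_zero
  refine ⟨c ^ 2 / (‖S‖ + 1), by positivity, fun u => ?_⟩
  set p := (LinearMap.ker (S : H →ₗ[ℝ] H))ᗮ.starProjection u
  have hp : c * ‖p‖ ≤ ‖S u‖ := calc
    c * ‖p‖ ≤ ‖T p - (1 : ℝ) • p‖ := hbound p (hker ▸ Submodule.starProjection_apply_mem _ u)
    _ = ‖S p‖ := by rw [one_smul, norm_sub_rev]; rfl
    _ = ‖S u‖ := by rw [S.apply_starProjection_orthogonal_ker u]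
  rw [← Submodule.starProjection_apply, ← hform]
  calc c ^ 2 / (‖S‖ + 1) * ‖p‖ ^ 2 = (c * ‖p‖) ^ 2 / (‖S‖ + 1) := by ring
    _ ≤ ‖S u‖ ^ 2 / (‖S‖ + 1) := by gcongr
    _ ≤ ‖S‖ * ⟪S u, u⟫ / (‖S‖ + 1) := by
      gcongr; exact hS.norm_apply_sq_le_opNorm_mul_re_inner u
    _ ≤ ⟪S u, u⟫ := by
      rw [div_le_iff₀ (by positivity)]
      nlinarith [hS.inner_nonneg_left u]
end
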